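/- Let p ≥ 2 be an integer, U₁,…,U_p real numbers, and c₁,…,c_p positive reals with ∑_{i=1}^p c_i = 1. Let X be a random variable with discrete law ∑_{i=1}^p c_i δ_{U_i} and set c_min := min_{1≤i≤p} c_i. Then for every t ∈ ℝ, 1 − |E[e^{itX}]| ≥ (c_min²/π²) · ∑_{j=2}^p dist(t(U₁−U_j), 2πℤ)², where dist(·, 2πℤ) denotes the distance to the set 2πℤ. -/

import Mathlib

/-!
Write `φ = ∑ cⱼ e^{iθⱼ}` with `θⱼ = t Uⱼ`. Expanding `|φ|²` gives
`1 - |φ|² = ∑_{j,k} cⱼ c_k (1 - cos (θⱼ - θ_k))`, a sum of nonnegative terms, and `|φ| ≤ 1` gives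
`1 - |φ| ≥ (1 - |φ|²) / 2`. Keeping only the row `j = 1` and using `c₁ c_k ≥ c_min²`, it remains
to bound `1 - cos x ≥ (2/π²) dist(x, 2πℤ)²`: this is `cos y ≤ 1 - 2y²/π²` on `[-π, π]`, applied
to the representative `y` of `x` modulo `2π`.
-/

open MeasureTheory Real

/-- The distance from `x` to the set `2πℤ`. -/
noncomputable def dist2piZ (x : ℝ) : ℝ := ⨅ k : ℤ, |x - 2 * π * k|

theorem dist2piZ_le (x : ℝ) (k : ℤ) : dist2piZ x ≤ |x - 2 * π * k| :=
  ciInf_le ⟨0, by rintro _ ⟨k, rfl⟩; exact abs_nonneg _⟩ k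

theorem dist2piZ_nonneg (x : ℝ) : 0 ≤ dist2piZ x :=
  le_ciInf fun _ => abs_nonneg _

theorem exists_abs_sub_two_pi_mul_int_le_pi (x : ℝ) : ∃ k : ℤ, |x - 2 * π * k| ≤ π := by
  refine ⟨round (x / (2 * π)), ?_⟩
  have h := abs_sub_round (x / (2 * π))
  rw [show x / (2 * π) - round (x / (2 * π)) = (x - 2 * π * round (x / (2 * π))) / (2 * π) by
    field_simp, abs_div, abs_of_pos (by positivity : (0 : ℝ) < 2 * π),
    div_le_iff₀ (by positivity)] at h
  linarith

theorem two_div_pi_sq_mul_dist2piZ_sq_le_one_sub_cos (x : ℝ) :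
    2 / π ^ 2 * dist2piZ x ^ 2 ≤ 1 - Real.cos x := by
  obtain ⟨k, hk⟩ := exists_abs_sub_two_pi_mul_int_le_pi x
  have hcos : Real.cos x = Real.cos (x - 2 * π * k) := by
    rw [show x - 2 * π * k = x - k * (2 * π) by ring, Real.cos_sub_int_mul_two_pi]
  have hdist : dist2piZ x ^ 2 ≤ (x - 2 * π * k) ^ 2 := by
    rw [← sq_abs (x - _)]
    exact pow_le_pow_left₀ (dist2piZ_nonneg x) (dist2piZ_le x k) 2
  calc 2 / π ^ 2 * dist2piZ x ^ 2 ≤ 2 / π ^ 2 * (x - 2 * π * k) ^ 2 := by gcongr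
    _ ≤ 1 - Real.cos x := by linarith [hcos ▸ Real.cos_le_one_sub_mul_cos_sq hk]

theorem integral_sum_smul_dirac {ι α E : Type*} [Fintype ι] [MeasurableSpace α]
    [MeasurableSingletonClass α] [NormedAddCommGroup E] [NormedSpace ℝ E] [CompleteSpace E]
    (f : α → E) (c : ι → ℝ) (hc : ∀ i, 0 ≤ c i) (x : ι → α) :
    ∫ a, f a ∂(∑ i, ENNReal.ofReal (c i) • Measure.dirac (x i)) = ∑ i, c i • f (x i) := by
  rw [integral_finsetSum_measure fun i _ =>
    (integrable_dirac enorm_lt_top).smul_measure ENNReal.ofReal_ne_top]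
  simp [integral_smul_measure, ENNReal.toReal_ofReal (hc _)]

theorem normSq_sum_ofReal_mul_exp {ι : Type*} (s : Finset ι) (c θ : ι → ℝ) :
    Complex.normSq (∑ j ∈ s, (c j : ℂ) * Complex.exp (θ j * Complex.I)) =
      ∑ j ∈ s, ∑ k ∈ s, c j * c k * Real.cos (θ j - θ k) := by
  simp only [Complex.normSq_apply, Complex.re_sum, Complex.im_sum, Complex.re_ofReal_mul,
    Complex.im_ofReal_mul, Complex.exp_ofReal_mul_I_re, Complex.exp_ofReal_mul_I_im,
    Finset.sum_mul_sum, ← Finset.sum_add_distrib, Real.cos_sub]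
  exact Finset.sum_congr rfl fun j _ => Finset.sum_congr rfl fun k _ => by ring

theorem norm_sum_ofReal_mul_exp_le {ι : Type*} (s : Finset ι) (c θ : ι → ℝ)
    (hc : ∀ i ∈ s, 0 ≤ c i) :
    ‖∑ j ∈ s, (c j : ℂ) * Complex.exp (θ j * Complex.I)‖ ≤ ∑ j ∈ s, c j := by
  refine (norm_sum_le _ _).trans_eq (Finset.sum_congr rfl fun j hj => ?_)
  rw [norm_mul, Complex.norm_exp_ofReal_mul_I, Complex.norm_real, Real.norm_of_nonneg (hc j hj),
    mul_one]

theorem one_sub_normSq_sum_ofReal_mul_exp {ι : Type*} (s : Finset ι) (c θ : ι → ℝ)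
    (hsum : ∑ i ∈ s, c i = 1) :
    1 - Complex.normSq (∑ j ∈ s, (c j : ℂ) * Complex.exp (θ j * Complex.I)) =
      ∑ j ∈ s, ∑ k ∈ s, c j * c k * (1 - Real.cos (θ j - θ k)) := by
  have hone : ∑ j ∈ s, ∑ k ∈ s, c j * c k = 1 := by rw [← Finset.sum_mul_sum, hsum, one_mul]
  simp only [normSq_sum_ofReal_mul_exp, mul_sub, mul_one, Finset.sum_sub_distrib, hone]

theorem sum_mul_one_sub_cos_le_two_mul_one_sub_norm {ι : Type*} [Fintype ι] (c θ : ι → ℝ)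
    (hc : ∀ i, 0 ≤ c i) (hsum : ∑ i, c i = 1) (i₀ : ι) :
    ∑ j, c i₀ * c j * (1 - Real.cos (θ i₀ - θ j)) ≤
      2 * (1 - ‖∑ j, (c j : ℂ) * Complex.exp (θ j * Complex.I)‖) := by
  set φ := ∑ j, (c j : ℂ) * Complex.exp (θ j * Complex.I)
  have hφ : ‖φ‖ ≤ 1 := hsum ▸ norm_sum_ofReal_mul_exp_le _ c θ fun i _ => hc i
  have hterm : ∀ j k, 0 ≤ c j * c k * (1 - Real.cos (θ j - θ k)) := fun j k =>
    mul_nonneg (mul_nonneg (hc j) (hc k)) (sub_nonneg.2 (Real.cos_le_one _))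
  have hrow : ∑ j, c i₀ * c j * (1 - Real.cos (θ i₀ - θ j)) ≤ 1 - ‖φ‖ ^ 2 := by
    rw [← Complex.normSq_eq_norm_sq, one_sub_normSq_sum_ofReal_mul_exp _ c θ hsum]
    exact Finset.single_le_sum (f := fun j => ∑ k, c j * c k * (1 - Real.cos (θ j - θ k)))
      (fun j _ => Finset.sum_nonneg fun k _ => hterm j k) (Finset.mem_univ i₀)
  nlinarith [norm_nonneg φ]

theorem iInf_sq_div_pi_sq_mul_sum_dist2piZ_sq_le {ι : Type*} [Fintype ι] [DecidableEq ι]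
    (c θ : ι → ℝ) (hc : ∀ i, 0 < c i) (hsum : ∑ i, c i = 1) (i₀ : ι) :
    (⨅ i, c i) ^ 2 / π ^ 2 * ∑ j ∈ Finset.univ.erase i₀, dist2piZ (θ i₀ - θ j) ^ 2 ≤
      1 - ‖∑ j, (c j : ℂ) * Complex.exp (θ j * Complex.I)‖ := by
  have : Nonempty ι := ⟨i₀⟩
  set m := ⨅ i, c i
  have hm : ∀ i, m ≤ c i := ciInf_le (Finite.bddBelow_range c)
  have hm₀ : 0 ≤ m := le_ciInf fun i => (hc i).le
  calc m ^ 2 / π ^ 2 * ∑ j ∈ Finset.univ.erase i₀, dist2piZ (θ i₀ - θ j) ^ 2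
      = 1 / 2 * ∑ j ∈ Finset.univ.erase i₀,
          m * m * (2 / π ^ 2 * dist2piZ (θ i₀ - θ j) ^ 2) := by
        rw [Finset.mul_sum, Finset.mul_sum]
        exact Finset.sum_congr rfl fun j _ => by ring
    _ ≤ 1 / 2 * ∑ j ∈ Finset.univ.erase i₀, c i₀ * c j * (1 - Real.cos (θ i₀ - θ j)) := by
        refine mul_le_mul_of_nonneg_left (Finset.sum_le_sum fun j _ => ?_) (by norm_num)
        exact mul_le_mul (mul_le_mul (hm i₀) (hm j) hm₀ (hc i₀).le)
          (two_div_pi_sq_mul_dist2piZ_sq_le_one_sub_cos _) (by positivity)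
          (mul_nonneg (hc i₀).le (hc j).le)
    _ ≤ 1 / 2 * ∑ j, c i₀ * c j * (1 - Real.cos (θ i₀ - θ j)) := by
        refine mul_le_mul_of_nonneg_left
          (Finset.sum_le_univ_sum_of_nonneg fun j => ?_) (by norm_num)
        exact mul_nonneg (mul_nonneg (hc i₀).le (hc j).le) (sub_nonneg.2 (Real.cos_le_one _))
    _ ≤ _ := by
        linarith [sum_mul_one_sub_cos_le_two_mul_one_sub_norm c θ (fun i => (hc i).le) hsum i₀]

theorem statement2
    (p : ℕ) (hp : 2 ≤ p) (U : Fin p → ℝ) (c : Fin p → ℝ)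
    (hc : ∀ i, 0 < c i) (hsum : ∑ i, c i = 1) :
    ∀ t : ℝ,
      ((⨅ i, c i) ^ 2 / π ^ 2) *
          ∑ j ∈ Finset.univ.erase (⟨0, by omega⟩ : Fin p),
            dist2piZ (t * (U ⟨0, by omega⟩ - U j)) ^ 2
        ≤ 1 - ‖∫ x, Complex.exp (t * x * Complex.I)
              ∂(∑ i, ENNReal.ofReal (c i) • Measure.dirac (U i))‖ := by
  intro t
  have hchar : ∫ x, Complex.exp (t * x * Complex.I)
      ∂(∑ i, ENNReal.ofReal (c i) • Measure.dirac (U i)) =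
        ∑ j, (c j : ℂ) * Complex.exp ((t * U j : ℝ) * Complex.I) := by
    simp [integral_sum_smul_dirac _ c (fun i => (hc i).le), Complex.real_smul]
  rw [hchar]
  simp only [mul_sub]
  exact iInf_sq_div_pi_sq_mul_sum_dist2piZ_sq_le c (fun j => t * U j) hc hsum _
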